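/- For even k ≥ 2, the proportion bal_k(n)/k^n of bw-balanced k-ary words of length n is asymptotic to √(2/(πn)) as n → ∞, i.e., lim_{n→∞} (bal_k(n)/k^n) · √(πn/2) = 1. -/

import Mathlib

/-- Black contribution of letter `h` at (1-based) index `i`. -/
def blackC (i h : ℕ) : ℕ := if Odd i then (h + 1) / 2 else h / 2

/-- White contribution of letter `h` at (1-based) index `i`. -/
def whiteC (i h : ℕ) : ℕ := if Odd i then h / 2 else (h + 1) / 2

/-- Number of black cells in the bargraph of the word `w`. -/
def black {n : ℕ} (w : Fin n → ℕ) : ℕ := ∑ i : Fin n, blackC (i.1 + 1) (w i)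

/-- Number of white cells in the bargraph of the word `w`. -/
def white {n : ℕ} (w : Fin n → ℕ) : ℕ := ∑ i : Fin n, whiteC (i.1 + 1) (w i)

/-- The number of bw-balanced `k`-ary words of length `n`. -/
def bal (k n : ℕ) : ℕ :=
  (Finset.univ.filter fun u : Fin n → Fin k =>
      black (fun i => (u i).1 + 1) = white (fun i => (u i).1 + 1)).card

/-!
Write `k = 2m`. A column of odd height has one more black than white cell, or one more white
than black, according to the parity of its position; a column of even height is balanced. So a
word is balanced exactly when its set `S` of odd-height columns meets the even and the odd
positions equally often. Each `S` is realised by `m ^ n` words (there are `m` letters of each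
parity), and `S ↦ S ∆ O`, with `O` the set of odd positions, is a bijection onto the subsets of
size `|O| = ⌊n/2⌋`; hence `bal (2m) n = C(n, ⌊n/2⌋) m ^ n`. The asymptotics of
`C(n, ⌊n/2⌋) / 2 ^ n` then follow from Stirling's formula, since
`C(2m+1, m) / 2 ^ (2m+1) = C(2m+2, m+1) / 4 ^ (m+1)`.
-/

open Finset Filter Real Stirling Topology

theorem card_filter_comp_eq_card_filter_mul_pow {ι α : Type*} [Fintype ι] [DecidableEq ι]
    [Fintype α] (p : α → Prop) [DecidablePred p] {c : ℕ} (hp : #{a | p a} = c)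
    (hnp : #{a | ¬p a} = c) (Q : Finset ι → Prop) [DecidablePred Q] :
    #{u : ι → α | Q {i | p (u i)}} = #{S : Finset ι | Q S} * c ^ Fintype.card ι := by
  let support : (ι → α) → Finset ι := fun u => {i | p (u i)}
  rw [card_eq_sum_card_fiberwise (f := support) (t := ({S | Q S} : Finset _))
    (fun u hu => by simpa using hu)]
  refine sum_const_nat fun S hS => ?_
  have hfiber : ({u ∈ ({u | Q (support u)} : Finset _) | support u = S}) =
      Fintype.piFinset fun i => ({a | p a ↔ i ∈ S} : Finset α) := by
    ext u
    simp only [mem_filter, mem_univ, true_and, Fintype.mem_piFinset, support, Finset.ext_iff]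
    constructor
    · rintro ⟨-, h⟩ i
      exact h i
    · intro h
      have hu : ({i | p (u i)} : Finset ι) = S := by ext i; simpa using h i
      exact ⟨hu ▸ (by simpa using hS), h⟩
  rw [hfiber, Fintype.card_piFinset, ← card_univ, ← prod_const]
  refine prod_congr rfl fun i _ => ?_
  by_cases hi : i ∈ S <;> simpa [hi]

theorem card_symmDiff_add_card_inter {α : Type*} [DecidableEq α] (s t : Finset α) :
    #(symmDiff s t) + #(s ∩ t) = #(s \ t) + #t := by
  rw [symmDiff_def, sup_eq_union, card_union_of_disjoint disjoint_sdiff_sdiff, inter_comm,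
    add_assoc, card_sdiff_add_card_inter]

theorem card_filter_card_sdiff_eq_card_inter {ι : Type*} [Fintype ι] [DecidableEq ι]
    (t : Finset ι) :
    #{s : Finset ι | #(s \ t) = #(s ∩ t)} = (Fintype.card ι).choose #t := by
  have hbalanced (s : Finset ι) : #(s \ t) = #(s ∩ t) ↔ #(symmDiff s t) = #t := by
    have := card_symmDiff_add_card_inter s t
    omega
  rw [← card_univ, ← card_powersetCard]
  refine card_nbij' (symmDiff · t) (symmDiff · t) (fun s hs => ?_) (fun s hs => ?_)
    (fun s _ => symmDiff_symmDiff_cancel_right _ _) (fun s _ => symmDiff_symmDiff_cancel_right _ _)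
  · simpa [hbalanced] using hs
  · simpa [hbalanced, symmDiff_symmDiff_cancel_right] using hs

theorem Nat.count_odd (N : ℕ) : N.count Odd = N / 2 := by
  induction N with
  | zero => rfl
  | succ N ih =>
    rw [Nat.count_succ, ih]
    split_ifs <;> grind

theorem Fin.card_filter_val (p : ℕ → Prop) [DecidablePred p] (N : ℕ) :
    #{a : Fin N | p a.val} = N.count p := by
  rw [Nat.count_eq_card_filter_range, ← card_map Fin.valEmbedding, map_filter']
  congr 1
  ext x
  simp only [mem_filter, mem_range, Fin.map_valEmbedding_univ, mem_Iio, Fin.valEmbedding_apply]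
  constructor
  · rintro ⟨hx, a, hp, rfl⟩
    exact ⟨hx, hp⟩
  · rintro ⟨hx, hp⟩
    exact ⟨hx, ⟨x, hx⟩, hp, rfl⟩

theorem Fin.card_filter_odd_val (N : ℕ) : #{a : Fin N | Odd a.val} = N / 2 := by
  rw [Fin.card_filter_val, Nat.count_odd]

theorem Fin.card_filter_even_val_two_mul (m : ℕ) : #{a : Fin (2 * m) | Even a.val} = m := by
  have h := card_filter_add_card_filter_not (s := (univ : Finset (Fin (2 * m))))
    fun a => Odd a.val
  simp only [Nat.not_odd_iff_even, Fin.card_filter_odd_val, card_univ, Fintype.card_fin] at h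
  omega

-- Indices are 0-based, so these are the even-numbered columns of the bargraph.
def oddPositions (n : ℕ) : Finset (Fin n) := {i | Odd i.val}

theorem blackC_add_eq_whiteC_add (i h : ℕ) :
    blackC (i + 1) h + (if Odd h ∧ Odd i then 1 else 0) =
      whiteC (i + 1) h + (if Odd h ∧ ¬Odd i then 1 else 0) := by
  simp only [blackC, whiteC, Nat.odd_add_one, Nat.odd_iff]
  split_ifs <;> omega

theorem black_add_card_inter_eq_white_add_card_sdiff {n : ℕ} (w : Fin n → ℕ) :
    black w + #(({i | Odd (w i)} : Finset _) ∩ oddPositions n) =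
      white w + #(({i | Odd (w i)} : Finset _) \ oddPositions n) := by
  rw [oddPositions, ← filter_and, ← filter_and_not, card_filter, card_filter, black, white,
    ← sum_add_distrib, ← sum_add_distrib]
  exact sum_congr rfl fun i _ => blackC_add_eq_whiteC_add i.val (w i)

theorem bal_two_mul (m n : ℕ) : bal (2 * m) n = n.choose (n / 2) * m ^ n := by
  have hbalanced (u : Fin n → Fin (2 * m)) :
      black (fun i => (u i).val + 1) = white (fun i => (u i).val + 1) ↔
        #(({i | Even (u i).val} : Finset _) \ oddPositions n) =
          #(({i | Even (u i).val} : Finset _) ∩ oddPositions n) := by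
    have h := black_add_card_inter_eq_white_add_card_sdiff fun i => (u i).val + 1
    simp only [Nat.odd_add_one, Nat.not_odd_iff_even] at h
    omega
  rw [bal, filter_congr fun u _ => hbalanced u,
    card_filter_comp_eq_card_filter_mul_pow (fun a : Fin (2 * m) => Even a.val)
      (Fin.card_filter_even_val_two_mul m) (by simpa using Fin.card_filter_odd_val (2 * m))
      (fun s => #(s \ oddPositions n) = #(s ∩ oddPositions n)),
    card_filter_card_sdiff_eq_card_inter, Fintype.card_fin, oddPositions,
    Fin.card_filter_odd_val]

theorem centralBinom_div_four_pow_mul_sqrt_eq {m : ℕ} (hm : m ≠ 0) :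
    (m.centralBinom : ℝ) / 4 ^ m * √(π * m) =
      stirlingSeq (2 * m) / stirlingSeq m ^ 2 * √π := by
  have hfac : (m.centralBinom : ℝ) * m.factorial ^ 2 = (2 * m).factorial := by
    have h := Nat.choose_mul_factorial_mul_factorial (show m ≤ 2 * m by omega)
    rw [show 2 * m - m = m by omega, ← Nat.centralBinom_eq_two_mul_choose] at h
    rw [sq, ← mul_assoc]
    exact_mod_cast h
  have hsqrt : √(2 * (2 * m : ℕ) : ℝ) = 2 * √(m : ℝ) := by
    push_cast
    rw [show (2 * (2 * m) : ℝ) = 2 ^ 2 * m by ring, sqrt_mul (by positivity), sqrt_sq zero_le_two]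
  have hpow : (((2 * m : ℕ) : ℝ) / exp 1) ^ (2 * m) = 4 ^ m * ((m / exp 1) ^ m) ^ 2 := by
    push_cast
    rw [mul_div_assoc, mul_pow, pow_mul, pow_mul']
    norm_num
  rw [stirlingSeq, stirlingSeq, ← hfac, hsqrt, hpow, sqrt_mul pi_pos.le]
  field_simp
  rw [sq_sqrt (by positivity), sq_sqrt (by positivity)]
  ring

theorem tendsto_centralBinom_div_four_pow_mul_sqrt :
    Tendsto (fun m : ℕ => (m.centralBinom : ℝ) / 4 ^ m * √(π * m)) atTop (𝓝 1) := by
  have hlim : Tendsto (fun m : ℕ => stirlingSeq (2 * m) / stirlingSeq m ^ 2 * √π) atTop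
      (𝓝 (√π / √π ^ 2 * √π)) :=
    ((tendsto_stirlingSeq_sqrt_pi.comp (tendsto_id.const_mul_atTop' two_pos)).div
      (tendsto_stirlingSeq_sqrt_pi.pow 2) (by positivity)).mul_const _
  rw [div_mul_eq_mul_div, ← sq, div_self (by positivity)] at hlim
  exact hlim.congr' <| (eventually_ne_atTop 0).mono fun m hm =>
    (centralBinom_div_four_pow_mul_sqrt_eq hm).symm

theorem Nat.centralBinom_succ_eq_two_mul_choose (m : ℕ) :
    (m + 1).centralBinom = 2 * (2 * m + 1).choose m := by
  rw [Nat.centralBinom_eq_two_mul_choose, show 2 * (m + 1) = 2 * m + 1 + 1 by ring,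
    Nat.choose_succ_succ', Nat.choose_symm_half, two_mul]
  ring

theorem tendsto_of_tendsto_comp_two_mul_of_tendsto_comp_two_mul_add_one {α : Type*}
    {f : ℕ → α} {l : Filter α} (heven : Tendsto (fun m => f (2 * m)) atTop l)
    (hodd : Tendsto (fun m => f (2 * m + 1)) atTop l) : Tendsto f atTop l := by
  rw [tendsto_atTop'] at heven hodd ⊢
  intro s hs
  obtain ⟨N₁, h₁⟩ := heven s hs
  obtain ⟨N₂, h₂⟩ := hodd s hs
  refine ⟨2 * (N₁ + N₂), fun n hn => ?_⟩
  obtain ⟨m, rfl | rfl⟩ := Nat.even_or_odd' n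
  · exact h₁ m (by omega)
  · exact h₂ m (by omega)

theorem tendsto_choose_half_div_two_pow_mul_sqrt :
    Tendsto (fun n : ℕ => (n.choose (n / 2) : ℝ) / 2 ^ n * √(π * n / 2)) atTop (𝓝 1) := by
  apply tendsto_of_tendsto_comp_two_mul_of_tendsto_comp_two_mul_add_one
  · refine tendsto_centralBinom_div_four_pow_mul_sqrt.congr fun m => ?_
    rw [Nat.centralBinom_eq_two_mul_choose, Nat.mul_div_cancel_left m two_pos, pow_mul]
    push_cast
    ring_nf
  · have hratio : Tendsto (fun m : ℕ => √(((2 * m + 1 : ℕ) : ℝ) / ((2 * m + 1 : ℕ) + 1)))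
        atTop (𝓝 1) := by
      have h := ((tendsto_natCast_div_add_atTop (1 : ℝ)).comp
        (StrictMono.tendsto_atTop (φ := fun m : ℕ => 2 * m + 1) fun a b hab => by
          simp only; omega)).sqrt
      rwa [sqrt_one] at h
    have h := (tendsto_centralBinom_div_four_pow_mul_sqrt.comp (tendsto_add_atTop_nat 1)).mul hratio
    rw [mul_one] at h
    refine h.congr fun m => ?_
    simp only [Function.comp]
    rw [show (2 * m + 1) / 2 = m by omega, Nat.centralBinom_succ_eq_two_mul_choose, mul_assoc,
      ← sqrt_mul (by positivity)]
    push_cast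
    congr 1
    · rw [pow_succ 4, pow_succ 2, pow_mul]; ring
    · congr 1; field_simp; ring

theorem stmt_17 (k : ℕ) (hk : 2 ≤ k) (hke : Even k) :
    Filter.Tendsto
      (fun n : ℕ => (bal k n : ℝ) / (k : ℝ) ^ n * Real.sqrt (Real.pi * n / 2))
      Filter.atTop (nhds 1) := by
  obtain ⟨m, rfl⟩ := hke.two_dvd
  have hm : (m : ℝ) ≠ 0 := by norm_cast; omega
  refine tendsto_choose_half_div_two_pow_mul_sqrt.congr fun n => ?_
  rw [bal_two_mul]
  push_cast
  rw [mul_pow]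
  field_simp
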